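/- arXiv:2007.15809 — 3 statements merged into one kernel-verified Lean document; each statement's English description precedes it below -/
import Mathlib

section
/- Let a, b, τ be real numbers with a ≠ 0 and τ ≥ 0. Then |∫₀^τ exp(i s (a² + 2ab)) ds − (exp(i τ a²) − 1)/(i a²) − (2b/a³)·(exp(i τ a²)(i + τ a²) − i)| ≤ (2/3) τ³ a² b². -/
/-!
Subtracting the linearized integrand `exp(isa²)(1 + iκs)`, `κ = 2ab`, whose integral is the
closed-form approximation, leaves `exp(isa²)(exp(iκs) − 1 − iκs)`. Since
`|exp(ix) − 1 − ix| ≤ x²/2`, the error is at most `∫₀^τ (κs)²/2 ds = κ²τ³/6 = (2/3)τ³a²b²`.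
-/

open Complex intervalIntegral ComplexConjugate

theorem norm_exp_I_mul_ofReal_sub_one_sub_le_of_nonneg {x : ℝ} (hx : 0 ≤ x) :
    ‖exp (I * x) - 1 - I * x‖ ≤ x ^ 2 / 2 := by
  have hderiv : ∀ t ∈ Set.uIcc 0 x,
      HasDerivAt (fun u : ℝ => exp (I * u) - I * u) (I * (exp (I * t) - 1)) t := fun t _ => by
    have hlin : HasDerivAt (fun u : ℝ => I * (u : ℂ)) I t := by
      simpa using (ofRealCLM.hasDerivAt (x := t)).const_mul I
    exact (hlin.cexp.sub hlin).congr_deriv (by ring)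
  have hint : ∫ t in (0 : ℝ)..x, I * (exp (I * t) - 1) = exp (I * x) - 1 - I * x := by
    rw [integral_eq_sub_of_hasDerivAt hderiv (by apply Continuous.intervalIntegrable; fun_prop)]
    simp only [ofReal_zero, mul_zero, exp_zero]
    ring
  have hbound : ∀ t ∈ Set.Ioc 0 x, ‖I * (exp (I * t) - 1)‖ ≤ t := fun t ht => by
    rw [norm_mul, norm_I, one_mul]
    simpa [abs_of_pos ht.1] using Real.norm_exp_I_mul_ofReal_sub_one_le (x := t)
  calc ‖exp (I * x) - 1 - I * x‖
      ≤ ∫ t in (0 : ℝ)..x, t := by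
        rw [← hint]
        exact norm_integral_le_of_norm_le hx (.of_forall hbound) intervalIntegrable_id
    _ = x ^ 2 / 2 := by simp [integral_id]

theorem norm_exp_I_mul_ofReal_sub_one_sub_le (x : ℝ) :
    ‖exp (I * x) - 1 - I * x‖ ≤ x ^ 2 / 2 := by
  rcases le_total 0 x with hx | hx
  · exact norm_exp_I_mul_ofReal_sub_one_sub_le_of_nonneg hx
  · have hconj : exp (I * x) - 1 - I * x = conj (exp (I * ↑(-x)) - 1 - I * ↑(-x)) := by
      simp [← exp_conj, sub_eq_add_neg]
    rw [hconj, norm_conj, ← neg_sq]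
    exact norm_exp_I_mul_ofReal_sub_one_sub_le_of_nonneg (neg_nonneg.mpr hx)

theorem hasDerivAt_exp_I_mul_antideriv (ω c : ℂ) (hω : ω ≠ 0) (s : ℝ) :
    HasDerivAt
      (fun s : ℝ => exp (I * s * ω) / (I * ω) + c / ω ^ 2 * (exp (I * s * ω) * (I + s * ω)))
      (exp (I * s * ω) * (1 + I * c * s)) s := by
  have hid : HasDerivAt (fun u : ℝ => (u : ℂ)) 1 s := ofRealCLM.hasDerivAt
  have hphase : HasDerivAt (fun u : ℝ => I * u * ω) (I * ω) s := by
    simpa using (hid.const_mul I).mul_const ω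
  have haffine : HasDerivAt (fun u : ℝ => I + u * ω) ω s := by
    simpa using (hid.mul_const ω).const_add I
  refine ((hphase.cexp.div_const (I * ω)).add
    ((hphase.cexp.mul haffine).const_mul (c / ω ^ 2))).congr_deriv ?_
  field_simp
  linear_combination c * I_sq

theorem integral_exp_I_mul_mul_one_add (ω c : ℂ) (hω : ω ≠ 0) (τ : ℝ) :
    ∫ s in (0 : ℝ)..τ, exp (I * s * ω) * (1 + I * c * s) =
      (exp (I * τ * ω) - 1) / (I * ω) + c / ω ^ 2 * (exp (I * τ * ω) * (I + τ * ω) - I) := by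
  rw [integral_eq_sub_of_hasDerivAt (fun s _ => hasDerivAt_exp_I_mul_antideriv ω c hω s)
    (by apply Continuous.intervalIntegrable; fun_prop)]
  simp only [ofReal_zero, mul_zero, zero_mul, exp_zero, one_mul]
  ring

theorem norm_exp_I_mul_add_sub_le (ω κ s : ℝ) :
    ‖exp (I * s * (ω + κ)) - exp (I * s * ω) * (1 + I * κ * s)‖ ≤ (κ * s) ^ 2 / 2 := by
  have hsplit : exp (I * s * (ω + κ)) - exp (I * s * ω) * (1 + I * κ * s) =
      exp (I * ↑(s * ω)) * (exp (I * ↑(κ * s)) - 1 - I * ↑(κ * s)) := by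
    push_cast
    rw [mul_add, exp_add]
    ring_nf
  rw [hsplit, norm_mul, norm_exp_I_mul_ofReal, one_mul]
  exact norm_exp_I_mul_ofReal_sub_one_sub_le _

theorem norm_integral_exp_I_mul_add_sub_le (ω κ : ℝ) {τ : ℝ} (hτ : 0 ≤ τ) :
    ‖(∫ s in (0 : ℝ)..τ, exp (I * s * (ω + κ))) -
        ∫ s in (0 : ℝ)..τ, exp (I * s * ω) * (1 + I * κ * s)‖ ≤ κ ^ 2 * τ ^ 3 / 6 := by
  rw [← integral_sub (by apply Continuous.intervalIntegrable; fun_prop)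
    (by apply Continuous.intervalIntegrable; fun_prop)]
  calc _ ≤ ∫ s in (0 : ℝ)..τ, (κ * s) ^ 2 / 2 :=
        norm_integral_le_of_norm_le hτ (.of_forall fun s _ => norm_exp_I_mul_add_sub_le ω κ s)
          (by apply Continuous.intervalIntegrable; fun_prop)
    _ = κ ^ 2 * τ ^ 3 / 6 := by
        simp only [mul_pow, integral_div, integral_const_mul, integral_pow]
        ring

/-- Local truncation error, with explicit constant, of the low-regularity integrator's
frequency-level approximation of the potential term of the disordered NLS:
`|∫₀^τ exp(i s (a² + 2ab)) ds − (exp(i τ a²) − 1)/(i a²)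
   − (2b/a³)(exp(i τ a²)(i + τ a²) − i)| ≤ (2/3) τ³ a² b²`. -/
theorem stmt_5 (a b τ : ℝ) (ha : a ≠ 0) (hτ : 0 ≤ τ) :
    ‖
      ((∫ s in (0 : ℝ)..τ,
          Complex.exp (Complex.I * (s : ℂ) * ((a : ℂ) ^ 2 + 2 * (a : ℂ) * (b : ℂ)))) -
        (Complex.exp (Complex.I * (τ : ℂ) * (a : ℂ) ^ 2) - 1) / (Complex.I * (a : ℂ) ^ 2) -
        (2 * (b : ℂ) / (a : ℂ) ^ 3) *
          (Complex.exp (Complex.I * (τ : ℂ) * (a : ℂ) ^ 2) *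
            (Complex.I + (τ : ℂ) * (a : ℂ) ^ 2) - Complex.I))‖ ≤
      (2 / 3) * τ ^ 3 * a ^ 2 * b ^ 2 := by
  have hexact := integral_exp_I_mul_mul_one_add ((a : ℂ) ^ 2) (2 * a * b)
    (pow_ne_zero 2 (ofReal_ne_zero.mpr ha)) τ
  have hbound := norm_integral_exp_I_mul_add_sub_le (a ^ 2) (2 * a * b) hτ
  push_cast at hbound
  rw [hexact] at hbound
  have hcoeff : 2 * (b : ℂ) / (a : ℂ) ^ 3 = 2 * a * b / ((a : ℂ) ^ 2) ^ 2 := by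
    field_simp [ofReal_ne_zero.mpr ha]
  rw [hcoeff, sub_sub]
  calc _ ≤ (2 * a * b) ^ 2 * τ ^ 3 / 6 := hbound
    _ = (2 / 3) * τ ^ 3 * a ^ 2 * b ^ 2 := by ring
end

section
/- Let μ, ν, τ be real numbers with μ ≠ 0 and τ > 0. Then |(2ν/μ³)·(exp(i τ μ²)(i + τ μ²) − i) − (2 sin(ν τ)/(μ³ τ))·(exp(i τ μ²)(i + τ μ²) − i)| ≤ (1/2) τ³ |μ| ν². -/
/-!
The difference factors as `(2 / μ³) · (ν − sin(ντ)/τ) · D` with `D = exp(iτμ²)(i + τμ²) − i`.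
Both `x ↦ sin x − x` and `x ↦ exp(ix)(i + x) − i` vanish at `0` and have derivatives of norm at
most `|x|` (namely `cos x − 1` and `i x exp(ix)`), so each is bounded by `x²/2`; this gives
`|ν − sin(ντ)/τ| ≤ τν²/2` and `‖D‖ ≤ τ²μ⁴/2`.
-/

open Complex

theorem norm_le_sq_div_two_of_norm_deriv_le_abs {E : Type*} [NormedAddCommGroup E]
    [NormedSpace ℝ E] {f f' : ℝ → E} (hf : ∀ t, HasDerivAt f (f' t) t) (h0 : f 0 = 0)
    (bound : ∀ t, ‖f' t‖ ≤ |t|) (x : ℝ) : ‖f x‖ ≤ x ^ 2 / 2 := by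
  have key : ∀ {g g' : ℝ → E}, (∀ t, HasDerivAt g (g' t) t) → g 0 = 0 →
      (∀ t, ‖g' t‖ ≤ |t|) → ∀ y, 0 ≤ y → ‖g y‖ ≤ y ^ 2 / 2 := by
    intro g g' hg hg0 hbound y hy
    refine image_norm_le_of_norm_deriv_right_le_deriv_boundary
      (B := fun t => t ^ 2 / 2) (B' := id)
      (fun t _ => (hg t).continuousAt.continuousWithinAt) (fun t _ => (hg t).hasDerivWithinAt)
      (by simp [hg0]) (fun t => ?_) (fun t ht => ?_) ⟨hy, le_rfl⟩
    · simpa using ((hasDerivAt_id t).pow 2).div_const 2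
    · simpa [abs_of_nonneg ht.1] using hbound t
  rcases le_total 0 x with hx | hx
  · exact key hf h0 bound x hx
  · have hneg : ∀ t, HasDerivAt (fun s => f (-s)) (-f' (-t)) t := fun t => by
      simpa [Function.comp_def] using (hf (-t)).scomp t (hasDerivAt_neg t)
    simpa using key hneg (by simpa using h0) (fun t => by simpa using bound (-t)) (-x) (by linarith)

theorem Real.abs_sin_sub_self_le (x : ℝ) : |Real.sin x - x| ≤ x ^ 2 / 2 := by
  refine norm_le_sq_div_two_of_norm_deriv_le_abs (f' := fun t => Real.cos t - 1)
    (fun t => (Real.hasDerivAt_sin t).sub (hasDerivAt_id t)) (by simp) (fun t => ?_) x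
  simpa using Real.abs_cos_sub_cos_le t 0

theorem norm_cexp_mul_I_add_I_sub_I_le (x : ℝ) :
    ‖cexp (I * x) * (I + x) - I‖ ≤ x ^ 2 / 2 := by
  refine norm_le_sq_div_two_of_norm_deriv_le_abs (f := fun t : ℝ => cexp (I * t) * (I + t) - I)
    (f' := fun t => I * t * cexp (I * t)) (fun t => ?_) (by simp) (fun t => by simp) x
  have hexp : HasDerivAt (fun s : ℝ => cexp (I * s)) (cexp (I * t) * I) t :=
    (((hasDerivAt_id (t : ℂ)).const_mul I).cexp.comp_ofReal).congr_deriv (by simp)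
  convert (hexp.mul ((hasDerivAt_id t).ofReal_comp.const_add I)).sub_const I using 1
  · rfl
  · simp only [id, Complex.ofReal_one, mul_one]
    linear_combination -cexp (I * t) * I_mul_I

theorem Real.abs_sub_sin_mul_div_le (ν : ℝ) {τ : ℝ} (hτ : 0 < τ) :
    |ν - Real.sin (ν * τ) / τ| ≤ τ * ν ^ 2 / 2 := by
  rw [show ν - Real.sin (ν * τ) / τ = -((Real.sin (ν * τ) - ν * τ) / τ) by field_simp; ring,
    abs_neg, abs_div, abs_of_pos hτ, div_le_iff₀ hτ]
  linarith [Real.abs_sin_sub_self_le (ν * τ)]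

/-- Error of the filtered replacement `ν ↦ sin(ντ)/τ` in the integrated potential term of
the low-regularity integrator for the disordered NLS:
`|(2ν/μ³)(exp(iτμ²)(i + τμ²) − i) − (2 sin(ντ)/(μ³τ))(exp(iτμ²)(i + τμ²) − i)|
  ≤ (1/2) τ³ |μ| ν²`. -/
theorem stmt_7 (μ ν τ : ℝ) (hμ : μ ≠ 0) (hτ : 0 < τ) :
    ‖((2 * (ν : ℂ) / (μ : ℂ) ^ 3) *
          (Complex.exp (Complex.I * (τ : ℂ) * (μ : ℂ) ^ 2) *
            (Complex.I + (τ : ℂ) * (μ : ℂ) ^ 2) - Complex.I) -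
        (2 * (Real.sin (ν * τ) : ℂ) / ((μ : ℂ) ^ 3 * (τ : ℂ))) *
          (Complex.exp (Complex.I * (τ : ℂ) * (μ : ℂ) ^ 2) *
            (Complex.I + (τ : ℂ) * (μ : ℂ) ^ 2) - Complex.I))‖ ≤
      (1 / 2) * τ ^ 3 * |μ| * ν ^ 2 := by
  set D := cexp (I * τ * μ ^ 2) * (I + τ * μ ^ 2) - I
  have hD : ‖D‖ ≤ τ ^ 2 * |μ| ^ 4 / 2 := by
    have h := norm_cexp_mul_I_add_I_sub_I_le (τ * μ ^ 2)
    push_cast [← mul_assoc] at h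
    exact h.trans_eq (by rw [← sq_abs μ]; ring)
  calc _ = ‖(2 / μ ^ 3 : ℂ) * ((ν - Real.sin (ν * τ) / τ : ℝ) : ℂ) * D‖ := by
        congr 1; push_cast; ring
    _ = 2 / |μ| ^ 3 * |ν - Real.sin (ν * τ) / τ| * ‖D‖ := by
        simp only [norm_mul, norm_div, norm_pow, Complex.norm_real, Real.norm_eq_abs,
          Complex.norm_ofNat]
    _ ≤ 2 / |μ| ^ 3 * (τ * ν ^ 2 / 2) * (τ ^ 2 * |μ| ^ 4 / 2) := by
        gcongr
        exact Real.abs_sub_sin_mul_div_le ν hτ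
    _ = (1 / 2) * τ ^ 3 * |μ| * ν ^ 2 := by
        field_simp
end

section
/- For all real numbers p, q and all τ ≥ 0 one has |∫₀^τ (exp(i ρ (p + q)) − exp(i ρ p) − exp(i ρ q) + 1) dρ| ≤ τ³ |p| |q| / 3. -/
/-! Since `exp(iρ(p+q)) − exp(iρp) − exp(iρq) + 1 = (exp(iρp) − 1)(exp(iρq) − 1)` and
`|exp(ix) − 1| ≤ |x|`, the integrand is bounded by `ρ²|p||q|`, whose integral over `[0, τ]`
is `τ³|p||q|/3`. -/

open Complex

theorem Complex.exp_add_sub_exp_sub_exp_add_one (a b : ℂ) :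
    exp (a + b) - exp a - exp b + 1 = (exp a - 1) * (exp b - 1) := by
  rw [exp_add]
  ring

theorem norm_exp_I_mul_add_sub_exp_sub_exp_add_one_le (ρ p q : ℝ) :
    ‖exp (I * ρ * (p + q)) - exp (I * ρ * p) - exp (I * ρ * q) + 1‖ ≤ ρ ^ 2 * |p| * |q| := by
  have exp_sub_one_le (x : ℝ) : ‖exp (I * ρ * x) - 1‖ ≤ |ρ| * |x| := by
    simpa [mul_assoc, abs_mul] using Real.norm_exp_I_mul_ofReal_sub_one_le (x := ρ * x)
  rw [mul_add, exp_add_sub_exp_sub_exp_add_one, norm_mul]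
  calc _ ≤ (|ρ| * |p|) * (|ρ| * |q|) :=
        mul_le_mul (exp_sub_one_le p) (exp_sub_one_le q) (norm_nonneg _) (by positivity)
    _ = ρ ^ 2 * |p| * |q| := by rw [← sq_abs ρ]; ring

/-- Time-integrated phase-factorization estimate used in the low-regularity integrator for
the cubic nonlinearity of the disordered NLS:
`|∫₀^τ (exp(iρ(p+q)) − exp(iρp) − exp(iρq) + 1) dρ| ≤ τ³|p||q|/3`. -/
theorem stmt_11 (p q τ : ℝ) (hτ : 0 ≤ τ) :
    ‖(∫ ρ in (0 : ℝ)..τ,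
        (Complex.exp (Complex.I * (ρ : ℂ) * ((p : ℂ) + (q : ℂ))) -
          Complex.exp (Complex.I * (ρ : ℂ) * (p : ℂ)) -
          Complex.exp (Complex.I * (ρ : ℂ) * (q : ℂ)) + 1))‖ ≤
      τ ^ 3 * |p| * |q| / 3 := by
  have integral_bound : ∫ ρ in (0 : ℝ)..τ, ρ ^ 2 * |p| * |q| = τ ^ 3 * |p| * |q| / 3 := by
    rw [intervalIntegral.integral_mul_const, intervalIntegral.integral_mul_const, integral_pow]
    ring
  rw [← integral_bound]
  refine intervalIntegral.norm_integral_le_of_norm_le hτ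
    (Filter.Eventually.of_forall fun ρ _ => norm_exp_I_mul_add_sub_exp_sub_exp_add_one_le ρ p q) ?_
  exact ((intervalIntegral.intervalIntegrable_pow 2).mul_const _).mul_const _
end
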